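/- Let tildeL = {(z,α,r) ∈ ℂ×ℝ×ℝ : 0 < r, |z| < r}. The connected component of the set {(z,α,r) ∈ tildeL : r·cos α = 1} containing the point e = (0,0,1) is E_e = {(z,α,r) ∈ tildeL : |α| < π/2 and r = 1/cos α}. -/
import Mathlib


open Real

/-- `tildeL = {(z,α,r) ∈ ℂ×ℝ×ℝ : 0 < r, |z| < r}`. -/
def tL : Set (ℂ × ℝ × ℝ) := {x | 0 < x.2.2 ∧ ‖x.1‖ < x.2.2}

/-- `E_e = {(z,α,r) ∈ tildeL : |α| < π/2, r = 1/cos α}`. -/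
noncomputable def Ee : Set (ℂ × ℝ × ℝ) :=
  {x ∈ tL | |x.2.1| < π / 2 ∧ x.2.2 = 1 / Real.cos x.2.1}

lemma Ee_eq_image :
    Ee = (fun p : ℂ × ℝ => (p.1 / (Real.cos p.2 : ℂ), p.2, 1 / Real.cos p.2)) ''
      (Metric.ball (0:ℂ) 1 ×ˢ Set.Ioo (-(π/2)) (π/2)) := by
  ext ⟨z, α, r⟩
  simp only [Ee, tL, Set.mem_setOf_eq, Set.mem_image, Set.mem_prod, Metric.mem_ball,
    Set.mem_Ioo, Prod.exists]
  constructor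
  · rintro ⟨⟨hr, hz⟩, hα, hrc⟩
    have hcos : 0 < Real.cos α := Real.cos_pos_of_mem_Ioo (by constructor <;> linarith [abs_lt.mp hα])
    refine ⟨z * (Real.cos α : ℂ), α, ⟨?_, ?_⟩, ?_⟩
    · rw [dist_zero_right, norm_mul, Complex.norm_real, Real.norm_eq_abs,
        abs_of_pos hcos]
      calc ‖z‖ * Real.cos α < r * Real.cos α := by
            apply mul_lt_mul_of_pos_right hz hcos
        _ = (1 / Real.cos α) * Real.cos α := by rw [hrc]
        _ = 1 := by field_simp
    · exact ⟨by linarith [abs_lt.mp hα], by linarith [abs_lt.mp hα]⟩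
    · have hc0 : (Real.cos α : ℂ) ≠ 0 := by
        exact_mod_cast ne_of_gt hcos
      have h1 : z * (Real.cos α : ℂ) / (Real.cos α : ℂ) = z := mul_div_cancel_right₀ z hc0
      rw [Prod.ext_iff, Prod.ext_iff]
      exact ⟨h1, rfl, hrc.symm⟩
  · rintro ⟨w, β, ⟨hw, hβ1, hβ2⟩, heq⟩
    have hcos : 0 < Real.cos β := Real.cos_pos_of_mem_Ioo ⟨hβ1, hβ2⟩
    have hc0 : (Real.cos β : ℂ) ≠ 0 := by exact_mod_cast ne_of_gt hcos
    obtain ⟨hz, hα, hr⟩ : w / (Real.cos β : ℂ) = z ∧ β = α ∧ 1 / Real.cos β = r := by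
      simpa [Prod.ext_iff] using heq
    subst hα
    rw [dist_zero_right] at hw
    refine ⟨⟨?_, ?_⟩, ?_, hr.symm⟩
    · rw [← hr]; positivity
    · rw [← hz, ← hr, norm_div, Complex.norm_real, Real.norm_eq_abs, abs_of_pos hcos]
      gcongr
    · rw [abs_lt]; exact ⟨hβ1, hβ2⟩

set_option maxHeartbeats 1000000 in
theorem stmt13 :
    connectedComponentIn {x ∈ tL | x.2.2 * Real.cos x.2.1 = 1}
        ((0 : ℂ), (0 : ℝ), (1 : ℝ)) = Ee := by
  set S : Set (ℂ × ℝ × ℝ) := {x ∈ tL | x.2.2 * Real.cos x.2.1 = 1} with hS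
  have hcospos : ∀ x ∈ S, 0 < Real.cos x.2.1 := by
    rintro ⟨z, α, r⟩ ⟨⟨hr, _⟩, hrc⟩
    by_contra h
    push_neg at h
    nlinarith
  have hEsub : Ee ⊆ S := by
    rintro ⟨z, α, r⟩ ⟨⟨hr, hz⟩, hα, hrc⟩
    have hcos : 0 < Real.cos α :=
      Real.cos_pos_of_mem_Ioo (by constructor <;> linarith [abs_lt.mp hα])
    refine ⟨⟨hr, hz⟩, ?_⟩
    rw [hrc]; field_simp
  have heE : ((0 : ℂ), (0 : ℝ), (1 : ℝ)) ∈ Ee := by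
    refine ⟨⟨one_pos, by simp⟩, ?_, by simp⟩
    rw [abs_zero]
    positivity
  have hEconn : IsPreconnected Ee := by
    have hconv : IsPreconnected (Metric.ball (0:ℂ) 1 ×ˢ Set.Ioo (-(π/2)) (π/2)) :=
      (convex_ball (0:ℂ) 1).isPreconnected.prod (convex_Ioo _ _).isPreconnected
    have hcont : ContinuousOn
        (fun p : ℂ × ℝ => (p.1 / (Real.cos p.2 : ℂ), p.2, 1 / Real.cos p.2))
        (Metric.ball (0:ℂ) 1 ×ˢ Set.Ioo (-(π/2)) (π/2)) := by
      apply ContinuousOn.prodMk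
      · apply ContinuousOn.div continuousOn_fst
        · exact (Complex.continuous_ofReal.comp Real.continuous_cos).comp_continuousOn
            continuousOn_snd
        · rintro ⟨w, β⟩ ⟨_, hβ⟩
          have : 0 < Real.cos β := Real.cos_pos_of_mem_Ioo hβ
          exact_mod_cast ne_of_gt this
      · apply ContinuousOn.prodMk continuousOn_snd
        apply ContinuousOn.div continuousOn_const
          ((Real.continuous_cos.comp_continuousOn continuousOn_snd))
        rintro ⟨w, β⟩ ⟨_, hβ⟩
        exact ne_of_gt (Real.cos_pos_of_mem_Ioo hβ)
    exact Ee_eq_image ▸ hconv.image _ hcont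
  apply Set.Subset.antisymm
  · -- forward: component ⊆ Ee
    set C := connectedComponentIn S ((0 : ℂ), (0 : ℝ), (1 : ℝ)) with hC
    have hCsub : C ⊆ S := connectedComponentIn_subset _ _
    have heS : ((0 : ℂ), (0 : ℝ), (1 : ℝ)) ∈ S := hEsub heE
    have hCconn : IsPreconnected C :=
      (isPreconnected_connectedComponentIn)
    have heC : ((0 : ℂ), (0 : ℝ), (1 : ℝ)) ∈ C := mem_connectedComponentIn heS
    -- image of C under α-projection
    set A : Set ℝ := (fun x : ℂ × ℝ × ℝ => x.2.1) '' C with hA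
    have hAconn : IsPreconnected A :=
      hCconn.image _ (continuous_snd.fst.continuousOn)
    have hAord : A.OrdConnected := hAconn.ordConnected
    have h0A : (0 : ℝ) ∈ A := ⟨_, heC, rfl⟩
    have hApos : ∀ a ∈ A, 0 < Real.cos a := by
      rintro a ⟨x, hx, rfl⟩
      exact hcospos x (hCsub hx)
    have hAlt : ∀ a ∈ A, |a| < π / 2 := by
      intro a ha
      rw [abs_lt]
      constructor
      · by_contra h
        push_neg at h
        have : -(π/2) ∈ A := hAord.out ha h0A ⟨h, by linarith [pi_pos]⟩
        have := hApos _ this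
        simp [Real.cos_pi_div_two] at this
      · by_contra h
        push_neg at h
        have : (π/2) ∈ A := hAord.out h0A ha ⟨by linarith [pi_pos], h⟩
        have := hApos _ this
        simp [Real.cos_pi_div_two] at this
    rintro ⟨z, α, r⟩ hx
    obtain ⟨⟨hr, hz⟩, hrc⟩ := hCsub hx
    have hαA : α ∈ A := ⟨_, hx, rfl⟩
    have hcos := hApos _ hαA
    refine ⟨⟨hr, hz⟩, hAlt _ hαA, ?_⟩
    field_simp
    linarith [hrc]
  · exact hEconn.subset_connectedComponentIn heE hEsub
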